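/- arXiv:math/0601028 — 6 statements merged into one kernel-verified Lean document; each statement's English description precedes it below -/
import Mathlib

section
/- Let O be a valuation ring in an algebraically closed field L of characteristic zero, with valuation v taking values in a totally ordered abelian group. Let P(X) = Σ_s a_s X^s ∈ L[X] be a polynomial whose coefficients satisfy: a_i · a_j ≠ 0 for some indices i < j, and (j−i)·v(a_s) ≥ (j−s)·v(a_i) − (i−s)·v(a_j) for every s with a_s ≠ 0. Then there exists z ∈ L with P(z) = 0 and (j−i)·v(z) = v(a_i) − v(a_j). -/
/-!
As `L` is algebraically closed, `v a_i / v a_j` has a `(j - i)`-th root `ρ` in the value group,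
and the Newton condition says exactly that `s ↦ v a_s * ρ ^ s` is maximal at both `i` and `j`.
For a linear factor `X - r` with `v r ≠ ρ` this weighted valuation has a unique maximiser, and a
unique maximiser survives products: the two dominant terms multiply, and by the ultrametric
inequality every other contribution is strictly smaller. So if no root had valuation `ρ`, the
factorisation `P = c ∏ (X - r)` would give `P` a unique maximiser.
-/

open Polynomial Finset.HasAntidiagonal

namespace Polynomial

variable {L : Type*} [Field L] {Γ₀ : Type*} [LinearOrderedCommGroupWithZero Γ₀]

/-- `k` is the only index maximising `v (Q.coeff s) * ρ ^ s`: no edge of the Newton polygon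
of `Q` has slope `ρ`. -/
def IsDominantIndex (v : Valuation L Γ₀) (ρ : Γ₀) (Q : L[X]) (k : ℕ) : Prop :=
  ∀ s ≠ k, v (Q.coeff s) * ρ ^ s < v (Q.coeff k) * ρ ^ k

variable {v : Valuation L Γ₀} {ρ : Γ₀} {Q R : L[X]} {k l : ℕ}

theorem IsDominantIndex.pos (h : IsDominantIndex v ρ Q k) : 0 < v (Q.coeff k) * ρ ^ k :=
  zero_le.trans_lt (h (k + 1) k.succ_ne_self)

theorem IsDominantIndex.le (h : IsDominantIndex v ρ Q k) (s : ℕ) :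
    v (Q.coeff s) * ρ ^ s ≤ v (Q.coeff k) * ρ ^ k := by
  rcases eq_or_ne s k with rfl | hs
  · exact le_rfl
  · exact (h s hs).le

theorem isDominantIndex_C {c : L} (hc : c ≠ 0) : IsDominantIndex v ρ (C c) 0 := by
  intro s hs
  simpa [coeff_C_of_ne_zero hs] using zero_lt_iff.2 (v.ne_zero_iff.2 hc)

theorem IsDominantIndex.mul (hQ : IsDominantIndex v ρ Q k) (hR : IsDominantIndex v ρ R l)
    (hρ : ρ ≠ 0) : IsDominantIndex v ρ (Q * R) (k + l) := by
  set M := v (Q.coeff k) * ρ ^ k * (v (R.coeff l) * ρ ^ l)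
  have hterm : ∀ x : ℕ × ℕ, x ≠ (k, l) →
      v (Q.coeff x.1 * R.coeff x.2) * ρ ^ (x.1 + x.2) < M := by
    rintro ⟨a, b⟩ hab
    rw [v.map_mul, pow_add, mul_mul_mul_comm]
    rcases eq_or_ne a k with rfl | ha
    · exact mul_lt_mul_of_le_of_lt_of_nonneg_of_pos le_rfl (hR b (by simpa using hab))
        zero_le hQ.pos
    · exact mul_lt_mul_of_lt_of_le_of_nonneg_of_pos (hQ a ha) (hR.le b) zero_le hR.pos
  have hsum : ∀ (s : ℕ) (t : Finset (ℕ × ℕ)), (∀ x ∈ t, x.1 + x.2 = s ∧ x ≠ (k, l)) →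
      v (∑ x ∈ t, Q.coeff x.1 * R.coeff x.2) * ρ ^ s < M := by
    intro s t ht
    have hρs : 0 < ρ ^ s := pow_pos (zero_lt_iff.2 hρ) s
    rw [← lt_mul_inv_iff₀ hρs]
    refine v.map_sum_lt (mul_ne_zero (mul_pos hQ.pos hR.pos).ne' (inv_ne_zero hρs.ne')) ?_
    intro x hx
    rw [lt_mul_inv_iff₀ hρs, ← (ht x hx).1]
    exact hterm x (ht x hx).2
  have hmem : (k, l) ∈ antidiagonal (k + l) := mem_antidiagonal.2 rfl
  have hcoeff : v ((Q * R).coeff (k + l)) * ρ ^ (k + l) = M := by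
    rw [coeff_mul, ← Finset.add_sum_erase _ _ hmem, v.map_add_eq_of_lt_left]
    · rw [v.map_mul, pow_add, mul_mul_mul_comm]
    · refine lt_of_mul_lt_mul_right ?_ (zero_le (a := ρ ^ (k + l)))
      rw [v.map_mul, pow_add, mul_mul_mul_comm, ← pow_add]
      exact hsum _ _ fun x hx => ⟨mem_antidiagonal.1 (Finset.mem_of_mem_erase hx),
        Finset.ne_of_mem_erase hx⟩
  intro s hs
  rw [hcoeff, coeff_mul]
  exact hsum s _ fun x hx => ⟨mem_antidiagonal.1 hx,
    fun h => hs (by rw [← mem_antidiagonal.1 hx, h])⟩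

theorem exists_isDominantIndex_X_sub_C {r : L} (hr : v r ≠ ρ) :
    ∃ k, IsDominantIndex v ρ (X - C r) k := by
  rcases hr.lt_or_gt with hlt | hgt
  · refine ⟨1, fun s hs => ?_⟩
    rcases s with _ | _ | s
    · simpa using hlt
    · exact absurd rfl hs
    · simpa [coeff_X, coeff_C] using zero_le.trans_lt hlt
  · refine ⟨0, fun s hs => ?_⟩
    rcases s with _ | _ | s
    · exact absurd rfl hs
    · simpa using hgt
    · simpa [coeff_X, coeff_C] using zero_le.trans_lt hgt

theorem exists_isDominantIndex_prod_X_sub_C (hρ : ρ ≠ 0) {t : Multiset L}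
    (ht : ∀ r ∈ t, v r ≠ ρ) : ∃ k, IsDominantIndex v ρ (t.map fun r => X - C r).prod k := by
  induction t using Multiset.induction_on with
  | empty => exact ⟨0, by simpa using isDominantIndex_C (v := v) (ρ := ρ) one_ne_zero⟩
  | cons r t ih =>
    obtain ⟨k, hk⟩ := exists_isDominantIndex_X_sub_C (ht r (t.mem_cons_self r))
    obtain ⟨l, hl⟩ := ih fun x hx => ht x (Multiset.mem_cons_of_mem hx)
    exact ⟨k + l, by simpa using hk.mul hl hρ⟩

theorem Splits.exists_mem_roots_valuation_eq {P : L[X]} (hP : P.Splits) (hP0 : P ≠ 0)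
    (hρ : ρ ≠ 0) (hdom : ∀ k, ¬ IsDominantIndex v ρ P k) : ∃ r ∈ P.roots, v r = ρ := by
  by_contra! hroots
  obtain ⟨k, hk⟩ := exists_isDominantIndex_prod_X_sub_C hρ hroots
  rw [hP.eq_prod_roots] at hdom
  exact hdom _ ((isDominantIndex_C (leadingCoeff_ne_zero.2 hP0)).mul hk hρ)

theorem not_isDominantIndex_of_le {i j : ℕ} (hij : i ≠ j)
    (hle : ∀ s, v (Q.coeff s) * ρ ^ s ≤ v (Q.coeff i) * ρ ^ i)
    (heq : v (Q.coeff j) * ρ ^ j = v (Q.coeff i) * ρ ^ i) (k : ℕ) :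
    ¬ IsDominantIndex v ρ Q k := by
  intro hk
  rcases eq_or_ne i k with rfl | hik
  · exact (hk j hij.symm).ne heq
  · exact (hk i hik).not_ge (hle k)

end Polynomial

theorem mul_pow_eq_of_pow_sub_eq_div {G₀ : Type*} [CommGroupWithZero G₀] {a b ρ : G₀} {i j : ℕ}
    (hb : b ≠ 0) (hij : i ≤ j) (hρ : ρ ^ (j - i) = a / b) :
    b * ρ ^ j = a * ρ ^ i := by
  rw [← Nat.sub_add_cancel hij, pow_add, hρ, ← mul_assoc, mul_div_cancel₀ a hb]

theorem mul_pow_le_of_zpow_le {Γ₀ : Type*} [LinearOrderedCommGroupWithZero Γ₀] {a b c ρ : Γ₀}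
    {i j s : ℕ} (ha : a ≠ 0) (hb : b ≠ 0) (hij : i < j)
    (hρ : ρ ^ (j - i) = a / b)
    (hc : c ^ ((j : ℤ) - i) ≤ a ^ ((j : ℤ) - s) * b ^ ((s : ℤ) - i)) :
    c * ρ ^ s ≤ a * ρ ^ i := by
  have hji : ((j - i : ℕ) : ℤ) = (j : ℤ) - i := Nat.cast_sub hij.le
  rw [← pow_le_pow_iff_left₀ zero_le zero_le (Nat.sub_pos_of_lt hij).ne', mul_pow, mul_pow,
    pow_right_comm ρ s, pow_right_comm ρ i, hρ, ← zpow_natCast, ← zpow_natCast a, hji]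
  calc c ^ ((j : ℤ) - i) * (a / b) ^ s
      ≤ a ^ ((j : ℤ) - s) * b ^ ((s : ℤ) - i) * (a / b) ^ s := mul_le_mul_left hc _
    _ = a ^ ((j : ℤ) - i) * (a / b) ^ i := by
      simp only [← zpow_natCast, div_zpow, zpow_sub₀ ha, zpow_sub₀ hb]
      field_simp

theorem stmt0_general {L : Type*} [Field L] [IsAlgClosed L]
    {Γ₀ : Type*} [LinearOrderedCommGroupWithZero Γ₀]
    (v : Valuation L Γ₀) (P : Polynomial L) (i j : ℕ) (hij : i < j)
    (hij0 : P.coeff i * P.coeff j ≠ 0)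
    (hNewton : ∀ s, P.coeff s ≠ 0 →
      v (P.coeff s) ^ ((j : ℤ) - i) ≤
        v (P.coeff i) ^ ((j : ℤ) - s) * v (P.coeff j) ^ ((s : ℤ) - i)) :
    ∃ z : L, P.eval z = 0 ∧ v z ^ ((j : ℤ) - i) = v (P.coeff i) / v (P.coeff j) := by
  have hi : P.coeff i ≠ 0 := left_ne_zero_of_mul hij0
  have hj : P.coeff j ≠ 0 := right_ne_zero_of_mul hij0
  have hvi : v (P.coeff i) ≠ 0 := v.ne_zero_iff.2 hi
  have hvj : v (P.coeff j) ≠ 0 := v.ne_zero_iff.2 hj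
  have he : j - i ≠ 0 := (Nat.sub_pos_of_lt hij).ne'
  obtain ⟨w, hw⟩ := IsAlgClosed.exists_pow_nat_eq (P.coeff i / P.coeff j) (Nat.pos_of_ne_zero he)
  have hρ : v w ^ (j - i) = v (P.coeff i) / v (P.coeff j) := by rw [← map_pow, hw, map_div₀]
  have hρ0 : v w ≠ 0 := (pow_ne_zero_iff he).1 (hρ ▸ div_ne_zero hvi hvj)
  have hle (s : ℕ) : v (P.coeff s) * v w ^ s ≤ v (P.coeff i) * v w ^ i := by
    rcases eq_or_ne (P.coeff s) 0 with hs | hs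
    · simp [hs]
    · exact mul_pow_le_of_zpow_le hvi hvj hij hρ (hNewton s hs)
  obtain ⟨z, hz, hvz⟩ := (IsAlgClosed.splits P).exists_mem_roots_valuation_eq
    (fun h0 => hi (by rw [h0, coeff_zero])) hρ0
    (not_isDominantIndex_of_le hij.ne hle (mul_pow_eq_of_pow_sub_eq_div hvj hij.le hρ))
  exact ⟨z, (mem_roots'.1 hz).2, by rw [← Nat.cast_sub hij.le, zpow_natCast, hvz, hρ]⟩

/-- Newton polygon lemma: if the coefficients of `P` satisfy the Newton polygon
condition for indices `i < j`, then `P` has a root `z` with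
`(j-i)·v(z) = v(a_i) - v(a_j)` (written multiplicatively). -/
theorem stmt0 {L : Type*} [Field L] [IsAlgClosed L] [CharZero L]
    {Γ₀ : Type*} [LinearOrderedCommGroupWithZero Γ₀]
    (v : Valuation L Γ₀) (P : Polynomial L) (i j : ℕ) (hij : i < j)
    (hij0 : P.coeff i * P.coeff j ≠ 0)
    (hNewton : ∀ s, P.coeff s ≠ 0 →
      v (P.coeff s) ^ ((j : ℤ) - i) ≤
        v (P.coeff i) ^ ((j : ℤ) - s) * v (P.coeff j) ^ ((s : ℤ) - i)) :
    ∃ z : L, P.eval z = 0 ∧ v z ^ ((j : ℤ) - i) = v (P.coeff i) / v (P.coeff j) :=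
  stmt0_general v P i j hij hij0 hNewton
end

section
/- Let F be a field, v a valuation on F with value group Γ ≅ ℚ^r of finite rank r < ∞ as a ℚ-vector space, and O_v its valuation ring. If σ is a field automorphism of F with σ(O_v) ⊆ O_v, then σ(O_v) = O_v. -/
/-- If the value group of `v` is a `ℚ`-vector space of finite rank `r` and a field
automorphism `σ` satisfies `σ(O_v) ⊆ O_v`, then `σ(O_v) = O_v`. -/
theorem stmt2 {F : Type*} [Field F] {Γ₀ : Type*} [LinearOrderedCommGroupWithZero Γ₀]
    (v : Valuation F Γ₀) (hv : Function.Surjective v)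
    (r : ℕ) (e : Additive Γ₀ˣ ≃+ (Fin r → ℚ))
    (σ : F ≃+* F) (hσ : ∀ x : F, v x ≤ 1 → v (σ x) ≤ 1) :
    ∀ x : F, v x ≤ 1 ↔ v (σ x) ≤ 1 := by
  classical
  have hσz : ∀ a : F, a ≠ 0 → σ a ≠ 0 := by
    intro a ha h0
    exact ha (σ.injective (by simpa using h0))
  -- monotonicity of the induced map on values
  have hmono : ∀ a b : F, b ≠ 0 → v a ≤ v b → v (σ a) ≤ v (σ b) := by
    intro a b hb hab
    have hvb : (0 : Γ₀) < v b := zero_lt_iff.2 (v.ne_zero_iff.2 hb)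
    have h1 : v (a / b) ≤ 1 := by
      rw [map_div₀]; exact (div_le_one₀ hvb).2 hab
    have h2 := hσ _ h1
    rw [map_div₀ σ, map_div₀ v] at h2
    have hvσb : (0 : Γ₀) < v (σ b) := zero_lt_iff.2 (v.ne_zero_iff.2 (hσz b hb))
    exact (div_le_one₀ hvσb).1 h2
  have heq : ∀ a b : F, a ≠ 0 → b ≠ 0 → v a = v b → v (σ a) = v (σ b) := by
    intro a b ha hb h
    exact le_antisymm (hmono a b hb h.le) (hmono b a ha h.ge)
  -- choose preimages of units
  have hval : ∀ γ : Γ₀ˣ, ∃ x : F, x ≠ 0 ∧ v x = γ := by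
    intro γ
    obtain ⟨x, hx⟩ := hv γ
    refine ⟨x, ?_, hx⟩
    intro h
    rw [h, v.map_zero] at hx
    exact γ.ne_zero hx.symm
  let pick : Γ₀ˣ → F := fun γ => (hval γ).choose
  have pick_ne : ∀ γ, pick γ ≠ 0 := fun γ => (hval γ).choose_spec.1
  have pick_v : ∀ γ, v (pick γ) = γ := fun γ => (hval γ).choose_spec.2
  have hσne : ∀ γ, v (σ (pick γ)) ≠ 0 := fun γ =>
    v.ne_zero_iff.2 (hσz _ (pick_ne γ))
  -- the induced endomorphism of the value group
  have fwd : ∀ (x : F) (γ : Γ₀ˣ), x ≠ 0 → v x = γ → v (σ (pick γ)) = v (σ x) := by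
    intro x γ hx hxγ
    exact heq _ _ (pick_ne γ) hx ((pick_v γ).trans hxγ.symm)
  let f : Γ₀ˣ →* Γ₀ˣ :=
  { toFun := fun γ => Units.mk0 (v (σ (pick γ))) (hσne γ)
    map_one' := by
      apply Units.ext
      have : v (σ (pick 1)) = v (σ 1) := fwd 1 1 one_ne_zero (by simp)
      simpa using this
    map_mul' := by
      intro γ δ
      apply Units.ext
      have h1 : v (pick γ * pick δ) = (γ * δ : Γ₀ˣ) := by
        rw [v.map_mul, pick_v, pick_v]; rfl
      have h2 : v (σ (pick (γ * δ))) = v (σ (pick γ * pick δ)) :=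
        fwd _ _ (mul_ne_zero (pick_ne γ) (pick_ne δ)) h1
      simpa [map_mul] using h2 }
  -- f is surjective
  have hfsurj : Function.Surjective f := by
    intro δ
    obtain ⟨x, hx, hxδ⟩ := hval δ
    set y := σ.symm x with hy
    have hy0 : y ≠ 0 := by
      intro h0
      apply hx
      have : x = σ y := by simp [hy]
      rw [this, h0, map_zero]
    have hvy : v y ≠ 0 := v.ne_zero_iff.2 hy0
    refine ⟨Units.mk0 (v y) hvy, ?_⟩
    apply Units.ext
    have h2 : v (σ (pick (Units.mk0 (v y) hvy))) = v (σ y) :=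
      fwd y _ hy0 rfl
    have h3 : σ y = x := by simp [hy]
    show v (σ (pick (Units.mk0 (v y) hvy))) = (δ : Γ₀)
    rw [h2, h3, hxδ]
  -- transport to ℚ^r and get injectivity
  let g : (Fin r → ℚ) →+ (Fin r → ℚ) :=
    (e.toAddMonoidHom.comp (MonoidHom.toAdditive f)).comp e.symm.toAddMonoidHom
  have hgsurj : Function.Surjective g := by
    intro c
    obtain ⟨γ, hγ⟩ := hfsurj (Additive.toMul (e.symm c))
    refine ⟨e (Additive.ofMul γ), ?_⟩
    show e (MonoidHom.toAdditive f (e.symm (e (Additive.ofMul γ)))) = c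
    rw [e.symm_apply_apply]
    show e (Additive.ofMul (f γ)) = c
    rw [hγ]
    simp
  have hginj : Function.Injective g :=
    (LinearMap.injective_iff_surjective (f := g.toRatLinearMap)).2 hgsurj
  have hfinj : Function.Injective f := by
    intro a b hab
    have : g (e (Additive.ofMul a)) = g (e (Additive.ofMul b)) := by
      show e (MonoidHom.toAdditive f (e.symm (e (Additive.ofMul a)))) =
        e (MonoidHom.toAdditive f (e.symm (e (Additive.ofMul b))))
      rw [e.symm_apply_apply, e.symm_apply_apply]
      show e (Additive.ofMul (f a)) = e (Additive.ofMul (f b))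
      rw [hab]
    have := hginj this
    have := e.injective this
    exact Additive.ofMul.injective this
  -- conclusion
  intro x
  refine ⟨hσ x, fun hx => ?_⟩
  by_cases hx0 : x = 0
  · simp [hx0]
  by_contra hgt
  push_neg at hgt
  have hvx : v x ≠ 0 := v.ne_zero_iff.2 hx0
  have hinv : v x⁻¹ ≤ 1 := by
    rw [map_inv₀]
    exact (inv_le_one₀ (zero_lt_iff.2 hvx)).2 hgt.le
  have hσinv := hσ _ hinv
  rw [map_inv₀ σ, map_inv₀ v] at hσinv
  have hvσx : (0 : Γ₀) < v (σ x) := zero_lt_iff.2 (v.ne_zero_iff.2 (hσz x hx0))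
  have hone : v (σ x) = 1 :=
    le_antisymm hx ((inv_le_one₀ hvσx).1 hσinv)
  -- f sends the unit of v x to 1, so v x = 1, contradiction
  have hfx : f (Units.mk0 (v x) hvx) = 1 := by
    apply Units.ext
    show v (σ (pick (Units.mk0 (v x) hvx))) = 1
    rw [fwd x _ hx0 rfl, hone]
  have := hfinj (hfx.trans (map_one f).symm)
  have : v x = 1 := congrArg Units.val this
  exact absurd this (ne_of_gt hgt)
end

section
/- Let H be a totally disconnected topological group and U₁, U₂ subgroups of H. The following are equivalent: (1) the functors of U₁-invariants and U₂-invariants coincide on the category of smooth H-representations over ℚ; (2) they coincide on the category of smooth H-sets; (3) every open subgroup of H containing U₁ contains U₂, and vice versa. -/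
/-!
Both conditions on invariants are statements about stabilizers. The `U`-invariants of a smooth
`H`-set are the points whose (open) stabilizer contains `U`, so the open-subgroup condition forces
`U₁`- and `U₂`-invariants to agree. Conversely, for an open subgroup `V` the smooth `H`-set `H ⧸ V`
has the coset `V` as a `U`-invariant exactly when `U ≤ V`. Linear representations reduce to sets in
both directions: a smooth representation is in particular a smooth `H`-set, and a smooth `H`-set
`W` embeds `U`-equivariantly into the representation `W →₀ ℚ` via `w ↦ single w 1`, which is
smooth because the stabilizer of `f` contains those of the finitely many points of its support.
-/

open Finsupp

section SmoothPermutationActions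

variable {H : Type} [Group H] [TopologicalSpace H] {W : Type}

theorem fixedPoints_eq_of_forall_isOpen_le_iff {U₁ U₂ : Subgroup H}
    (hU : ∀ V : Subgroup H, IsOpen (V : Set H) → (U₁ ≤ V ↔ U₂ ≤ V))
    (ρ : H →* Equiv.Perm W) (hρ : ∀ w : W, IsOpen {g : H | ρ g w = w}) :
    {w : W | ∀ g ∈ U₁, ρ g w = w} = {w : W | ∀ g ∈ U₂, ρ g w = w} := by
  ext w
  exact hU ((MulAction.stabilizer (Equiv.Perm W) w).comap ρ) (hρ w)

theorem forall_isOpen_le_iff_of_fixedPoints_eq [ContinuousMul H] {U₁ U₂ : Subgroup H}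
    (hfix : ∀ (W : Type) (ρ : H →* Equiv.Perm W), (∀ w : W, IsOpen {g : H | ρ g w = w}) →
      {w : W | ∀ g ∈ U₁, ρ g w = w} = {w : W | ∀ g ∈ U₂, ρ g w = w})
    (V : Subgroup H) (hV : IsOpen (V : Set H)) : U₁ ≤ V ↔ U₂ ≤ V := by
  have := QuotientGroup.discreteTopology hV
  have hcoset (U : Subgroup H) :
      ((1 : H) : H ⧸ V) ∈ {x | ∀ g ∈ U, MulAction.toPermHom H (H ⧸ V) g x = x} ↔ U ≤ V := by
    conv_rhs => rw [← MulAction.stabilizer_quotient V]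
    rfl
  rw [← hcoset, ← hcoset, hfix _ _ (stabilizer_isOpen H)]

end SmoothPermutationActions

section Linearization

variable {H : Type} [Group H] {W : Type} (R : Type) [Ring R]

noncomputable def linearization (ρ : H →* Equiv.Perm W) : H →* ((W →₀ R) ≃ₗ[R] (W →₀ R)) where
  toFun g := Finsupp.domLCongr (ρ g)
  map_one' := by rw [map_one]; exact Finsupp.domLCongr_refl
  map_mul' g h := by
    rw [map_mul]
    exact (Finsupp.domLCongr_trans (M := R) (R := R) (ρ h) (ρ g)).symm

variable {R}

theorem linearization_apply (ρ : H →* Equiv.Perm W) (g : H) (f : W →₀ R) :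
    linearization R ρ g f = equivMapDomain (ρ g) f :=
  rfl

theorem linearization_apply_single (ρ : H →* Equiv.Perm W) (g : H) (w : W) (r : R) :
    linearization R ρ g (single w r) = single (ρ g w) r := by
  rw [linearization_apply, equivMapDomain_single]

theorem linearization_apply_eq_self {ρ : H →* Equiv.Perm W} {g : H} {f : W →₀ R}
    (hg : ∀ w ∈ f.support, ρ g w = w) : linearization R ρ g f = f := by
  rw [linearization_apply, equivMapDomain_eq_mapDomain, mapDomain_congr (g := id) hg, mapDomain_id]

theorem isOpen_setOf_linearization_apply_eq_self [TopologicalSpace H] [SeparatelyContinuousMul H]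
    {ρ : H →* Equiv.Perm W} (hρ : ∀ w : W, IsOpen {g : H | ρ g w = w}) (f : W →₀ R) :
    IsOpen {g : H | linearization R ρ g f = f} := by
  let stab (w : W) : Subgroup H := (MulAction.stabilizer (Equiv.Perm W) w).comap ρ
  have hle : ⨅ w ∈ f.support, stab w ≤
      (MulAction.stabilizer ((W →₀ R) ≃ₗ[R] (W →₀ R)) f).comap (linearization R ρ) := by
    intro g hg
    simp only [Subgroup.mem_iInf] at hg
    exact linearization_apply_eq_self hg
  refine Subgroup.isOpen_mono hle ?_
  simp only [Subgroup.coe_iInf]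
  exact isOpen_biInter_finset fun w _ ↦ hρ w

theorem forall_linearization_single_eq_self_iff [Nontrivial R] (ρ : H →* Equiv.Perm W)
    (U : Subgroup H) (w : W) :
    (∀ g ∈ U, linearization R ρ g (single w 1) = single w 1) ↔ ∀ g ∈ U, ρ g w = w := by
  simp only [linearization_apply_single, single_left_inj one_ne_zero]

end Linearization

theorem fixedPoints_eq_of_forall_linear_fixedPoints_eq {H : Type} [Group H] [TopologicalSpace H]
    [SeparatelyContinuousMul H] (R : Type) [Ring R] [Nontrivial R] {U₁ U₂ : Subgroup H}
    (hrep : ∀ (V : Type) [AddCommGroup V] [Module R V], ∀ ρ : H →* (V ≃ₗ[R] V),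
      (∀ w : V, IsOpen {g : H | ρ g w = w}) →
      {w : V | ∀ g ∈ U₁, ρ g w = w} = {w : V | ∀ g ∈ U₂, ρ g w = w})
    (W : Type) (ρ : H →* Equiv.Perm W) (hρ : ∀ w : W, IsOpen {g : H | ρ g w = w}) :
    {w : W | ∀ g ∈ U₁, ρ g w = w} = {w : W | ∀ g ∈ U₂, ρ g w = w} := by
  ext w
  have hsingle :=
    Set.ext_iff.mp (hrep _ _ (isOpen_setOf_linearization_apply_eq_self hρ)) (single w 1)
  exact (forall_linearization_single_eq_self_iff ρ U₁ w).symm.trans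
    (hsingle.trans (forall_linearization_single_eq_self_iff ρ U₂ w))

theorem stmt3_general {H : Type} [Group H] [TopologicalSpace H] [IsTopologicalGroup H]
    (U₁ U₂ : Subgroup H) :
    ((∀ (V : Type) [AddCommGroup V] [Module ℚ V], ∀ ρ : H →* (V ≃ₗ[ℚ] V),
        (∀ w : V, IsOpen {g : H | ρ g w = w}) →
        {w : V | ∀ g ∈ U₁, ρ g w = w} = {w : V | ∀ g ∈ U₂, ρ g w = w}) ↔
      (∀ V : Subgroup H, IsOpen (V : Set H) → (U₁ ≤ V ↔ U₂ ≤ V))) ∧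
    ((∀ (W : Type), ∀ ρ : H →* Equiv.Perm W,
        (∀ w : W, IsOpen {g : H | ρ g w = w}) →
        {w : W | ∀ g ∈ U₁, ρ g w = w} = {w : W | ∀ g ∈ U₂, ρ g w = w}) ↔
      (∀ V : Subgroup H, IsOpen (V : Set H) → (U₁ ≤ V ↔ U₂ ≤ V))) := by
  refine ⟨⟨fun hrep ↦ ?_, fun hU V _ _ ρ hρ ↦ ?_⟩,
    ⟨forall_isOpen_le_iff_of_fixedPoints_eq, fun hU _ ↦ fixedPoints_eq_of_forall_isOpen_le_iff hU⟩⟩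
  · exact forall_isOpen_le_iff_of_fixedPoints_eq
      (fixedPoints_eq_of_forall_linear_fixedPoints_eq ℚ hrep)
  · exact fixedPoints_eq_of_forall_isOpen_le_iff hU ((MulAction.toPermHom _ V).comp ρ) hρ

/-- For subgroups `U₁, U₂` of a totally disconnected topological group `H`, the
`U₁`- and `U₂`-invariants functors coincide on smooth `ℚ`-linear representations
iff they coincide on smooth `H`-sets iff every open subgroup containing one of
`U₁, U₂` contains the other. -/
theorem stmt3 {H : Type} [Group H] [TopologicalSpace H] [IsTopologicalGroup H]
    [TotallyDisconnectedSpace H] (U₁ U₂ : Subgroup H) :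
    ((∀ (V : Type) [AddCommGroup V] [Module ℚ V], ∀ ρ : H →* (V ≃ₗ[ℚ] V),
        (∀ w : V, IsOpen {g : H | ρ g w = w}) →
        {w : V | ∀ g ∈ U₁, ρ g w = w} = {w : V | ∀ g ∈ U₂, ρ g w = w}) ↔
      (∀ V : Subgroup H, IsOpen (V : Set H) → (U₁ ≤ V ↔ U₂ ≤ V))) ∧
    ((∀ (W : Type), ∀ ρ : H →* Equiv.Perm W,
        (∀ w : W, IsOpen {g : H | ρ g w = w}) →
        {w : W | ∀ g ∈ U₁, ρ g w = w} = {w : W | ∀ g ∈ U₂, ρ g w = w}) ↔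
      (∀ V : Subgroup H, IsOpen (V : Set H) → (U₁ ≤ V ↔ U₂ ≤ V))) :=
  stmt3_general U₁ U₂
end

section
/- Let H be a group, N ≥ 1, and H₀, H₁, …, H_N subgroups of H such that H_j normalizes H_i for all 1 ≤ i < j ≤ N. Then for any elements h_i ∈ H_i (1 ≤ i ≤ N), the element (h₁−1)(h₂−1)⋯(h_N−1) of the group algebra ℚ[H] lies in Σ_{h ∈ H_i} ℚ[H](h−1) for every 1 ≤ i ≤ N; i.e., its image in the ℚ-module of coinvariants ℚ[H/H_i] (pushforward along H → H/H_i) is zero for each i. -/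
open MonoidAlgebra in
lemma stmt8_aux {H : Type*} [Group H] (K : Subgroup H) :
    ∀ (L : List H), (∀ b ∈ L, ∀ x ∈ K, b⁻¹ * x * b ∈ K) → ∀ g ∈ K,
      (MonoidAlgebra.of ℚ H g - 1) *
        (L.map (fun b => MonoidAlgebra.of ℚ H b - 1)).prod ∈
        Ideal.span {a : MonoidAlgebra ℚ H | ∃ g ∈ K, a = MonoidAlgebra.of ℚ H g - 1} := by
  intro L
  induction L with
  | nil =>
    intro _ g hg
    simp only [List.map_nil, List.prod_nil, mul_one]
    exact Ideal.subset_span ⟨g, hg, rfl⟩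
  | cons b L ih =>
    intro hL g hg
    have hb : ∀ x ∈ K, b⁻¹ * x * b ∈ K := hL b (by simp)
    have hL' : ∀ b' ∈ L, ∀ x ∈ K, b'⁻¹ * x * b' ∈ K := fun b' hb' => hL b' (by simp [hb'])
    have key : (MonoidAlgebra.of ℚ H g - 1) * (MonoidAlgebra.of ℚ H b - 1) =
        (MonoidAlgebra.of ℚ H (g * b * g⁻¹) - 1) * (MonoidAlgebra.of ℚ H g - 1) +
          MonoidAlgebra.of ℚ H b *
            (MonoidAlgebra.of ℚ H (b⁻¹ * (g * b * g⁻¹)) - 1) := by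
      simp only [sub_mul, mul_sub, mul_one, one_mul, ← map_mul,
        inv_mul_cancel_right, mul_inv_cancel_left]
      abel
    rw [List.map_cons, List.prod_cons, ← mul_assoc, key, add_mul]
    apply Ideal.add_mem
    · rw [mul_assoc]
      exact Ideal.mul_mem_left _ _ (ih hL' g hg)
    · rw [mul_assoc]
      refine Ideal.mul_mem_left _ _ (ih hL' _ ?_)
      have : b⁻¹ * g * b ∈ K := by simpa [mul_assoc] using hb g hg
      simpa [mul_assoc] using K.mul_mem this (K.inv_mem hg)

/-- If `H_j` normalizes `H_i` for `1 ≤ i < j ≤ N`, then for any `h_i ∈ H_i` the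
element `(h₁−1)(h₂−1)⋯(h_N−1)` of the group algebra `ℚ[H]` lies in the left
ideal `Σ_{g ∈ H_i} ℚ[H](g−1)` for every `1 ≤ i ≤ N`. -/
theorem stmt8 {H : Type*} [Group H] (N : ℕ) (Hs : ℕ → Subgroup H)
    (hnorm : ∀ i j, 1 ≤ i → i < j → j ≤ N → ∀ g ∈ Hs j, ∀ x ∈ Hs i, g * x * g⁻¹ ∈ Hs i)
    (h : ℕ → H) (hh : ∀ i, 1 ≤ i → i ≤ N → h i ∈ Hs i) :
    ∀ i, 1 ≤ i → i ≤ N →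
      ((List.range N).map fun s => MonoidAlgebra.of ℚ H (h (s + 1)) - 1).prod ∈
        Ideal.span {a : MonoidAlgebra ℚ H | ∃ g ∈ Hs i, a = MonoidAlgebra.of ℚ H g - 1} := by
  intro i hi1 hiN
  -- split the range at position i-1
  have hsplit : N = (i - 1) + (1 + (N - i)) := by omega
  rw [hsplit]
  simp only [List.range_add, List.map_append, List.prod_append, List.map_map,
    Function.comp_def]
  apply Ideal.mul_mem_left

  have h1 : (List.range 1).map
      (fun s => MonoidAlgebra.of ℚ H (h ((i - 1) + s + 1)) - 1) =
      [MonoidAlgebra.of ℚ H (h i) - 1] := by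
    have h0 : List.range 1 = [0] := rfl
    have hidx : i - 1 + 0 + 1 = i := by omega
    simp only [h0, List.map_cons, List.map_nil, hidx]
  -- rewrite the middle singleton
  have : ((List.range 1).map fun s => MonoidAlgebra.of ℚ H (h (i - 1 + s + 1)) - 1).prod =
      MonoidAlgebra.of ℚ H (h i) - 1 := by rw [h1]; simp
  rw [this]
  -- tail list as mapped group elements
  have htail : ((List.range (N - i)).map fun s =>
      MonoidAlgebra.of ℚ H (h (i - 1 + (1 + s) + 1)) - 1) =
      ((List.range (N - i)).map (fun s => h (i + s + 1))).map
        (fun b => MonoidAlgebra.of ℚ H b - 1) := by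
    simp only [List.map_map, Function.comp_def]
    apply List.map_congr_left
    intro s _
    congr 3
    omega
  rw [htail]
  apply stmt8_aux
  · intro b hb x hx
    simp only [List.mem_map, List.mem_range] at hb
    obtain ⟨s, hs, rfl⟩ := hb
    have hj : h (i + s + 1) ∈ Hs (i + s + 1) := hh _ (by omega) (by omega)
    have := hnorm i (i + s + 1) hi1 (by omega) (by omega) _ ((Hs _).inv_mem hj) x hx
    simpa using this
  · exact hh i hi1 hiN
end

section
/- Let Y₁, Y₂ be sets and X ⊆ Y₁ × Y₂. Suppose the natural homomorphism α: ℤ[X] → ℤ[Y₁] × ℤ[Y₂], [(a,c)] ↦ ([a],[c]), is injective. Then: (1) for any a ≠ b in Y₁ there is at most one c ∈ Y₂ with both (a,c) ∈ X and (b,c) ∈ X; (2) the relation on Y₁ given by 'joined by some colour' contains no cycle with at least two distinct colours among its edges. -/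
private lemma mapDomain_sub' {α β : Type*} (f : α → β) (u v : α →₀ ℤ) :
    Finsupp.mapDomain f (u - v) = Finsupp.mapDomain f u - Finsupp.mapDomain f v :=
  map_sub (Finsupp.mapDomain.addMonoidHom f) u v

/-- If the natural map `ℤ[X] → ℤ[Y₁] × ℤ[Y₂]` induced by the two projections of
`X ⊆ Y₁ × Y₂` is injective, then (1) two distinct vertices of `Y₁` are joined by
at most one colour, and (2) every cycle in the associated coloured graph is
monochromatic. -/
theorem stmt10 {Y₁ Y₂ : Type*} (X : Set (Y₁ × Y₂))
    (hinj : Function.Injective fun μ : X →₀ ℤ =>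
      (Finsupp.mapDomain (fun p : X => (p : Y₁ × Y₂).1) μ,
       Finsupp.mapDomain (fun p : X => (p : Y₁ × Y₂).2) μ)) :
    (∀ a b : Y₁, ∀ c d : Y₂, a ≠ b →
      (a, c) ∈ X → (b, c) ∈ X → (a, d) ∈ X → (b, d) ∈ X → c = d) ∧
    (∀ n : ℕ, 0 < n → ∀ (av : ZMod n → Y₁) (bv : ZMod n → Y₂),
      Function.Injective av →
      (∀ i, (av i, bv i) ∈ X ∧ (av (i + 1), bv i) ∈ X) →
      ∀ i j, bv i = bv j) := by
  have key : ∀ μ : X →₀ ℤ,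
      Finsupp.mapDomain (fun p : X => (p : Y₁ × Y₂).1) μ = 0 →
      Finsupp.mapDomain (fun p : X => (p : Y₁ × Y₂).2) μ = 0 → μ = 0 := by
    intro μ h1 h2
    apply hinj (a₂ := 0)
    simp [h1, h2]
  constructor
  · intro a b c d hab hac hbc had hbd
    by_contra hcd
    set μ : X →₀ ℤ :=
      Finsupp.single ⟨(a,c),hac⟩ 1 - Finsupp.single ⟨(b,c),hbc⟩ 1
      - Finsupp.single ⟨(a,d),had⟩ 1 + Finsupp.single ⟨(b,d),hbd⟩ 1 with hμ
    have hz : μ = 0 := by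
      apply key
      · rw [hμ, Finsupp.mapDomain_add, mapDomain_sub', mapDomain_sub']
        simp only [Finsupp.mapDomain_single]
        abel
      · rw [hμ, Finsupp.mapDomain_add, mapDomain_sub', mapDomain_sub']
        simp only [Finsupp.mapDomain_single]
        abel
    have h0 := DFunLike.congr_fun hz (⟨(a,c),hac⟩ : X)
    simp [hμ, Finsupp.single_apply, Subtype.ext_iff, Prod.ext_iff, hab,
      Ne.symm hab, hcd, Ne.symm hcd] at h0
  · intro n hn av bv hav hcyc i j
    haveI : NeZero n := ⟨hn.ne'⟩
    have step : ∀ i : ZMod n, bv i = bv (i + 1) := by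
      intro i
      by_contra hne
      set μ : X →₀ ℤ := ∑ k : ZMod n,
        (Finsupp.single (⟨(av k, bv k), (hcyc k).1⟩ : X) 1
          - Finsupp.single (⟨(av (k+1), bv k), (hcyc k).2⟩ : X) 1) with hμ
      have hz : μ = 0 := by
        apply key
        · rw [hμ, Finsupp.mapDomain_finset_sum]
          simp only [mapDomain_sub', Finsupp.mapDomain_single]
          rw [Finset.sum_sub_distrib]
          rw [Fintype.sum_equiv (Equiv.addRight (1 : ZMod n))
            (fun k => Finsupp.single (av (k + 1)) (1:ℤ))
            (fun k => Finsupp.single (av k) (1:ℤ)) (fun k => rfl)]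
          simp
        · rw [hμ, Finsupp.mapDomain_finset_sum]
          simp [mapDomain_sub', Finsupp.mapDomain_single]
      set x : X := (⟨(av (i+1), bv (i+1)), (hcyc (i+1)).1⟩ : X) with hx
      have h0 := DFunLike.congr_fun hz x
      rw [hμ, Finsupp.finset_sum_apply] at h0
      simp only [Finsupp.sub_apply, Finsupp.coe_zero, Pi.zero_apply] at h0
      have e1 : ∀ k : ZMod n,
          ((⟨(av k, bv k), (hcyc k).1⟩ : X) = x) ↔ k = i + 1 := by
        intro k
        constructor
        · intro hk
          exact hav (congrArg (fun t : X => (t : Y₁ × Y₂).1) hk)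
        · rintro rfl; rfl
      have e2 : ∀ k : ZMod n,
          ¬ ((⟨(av (k+1), bv k), (hcyc k).2⟩ : X) = x) := by
        intro k hk
        have h1 : av (k + 1) = av (i + 1) :=
          congrArg (fun t : X => (t : Y₁ × Y₂).1) hk
        have hk' : k = i := add_right_cancel (hav h1)
        subst hk'
        exact hne (congrArg (fun t : X => (t : Y₁ × Y₂).2) hk)
      have hterm : ∀ k : ZMod n,
          (Finsupp.single (⟨(av k, bv k), (hcyc k).1⟩ : X) (1:ℤ)) x
            - (Finsupp.single (⟨(av (k+1), bv k), (hcyc k).2⟩ : X) (1:ℤ)) x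
            = if k = i + 1 then 1 else 0 := by
        intro k
        classical
        rw [Finsupp.single_apply, Finsupp.single_apply, if_neg (e2 k), sub_zero]
        simp [e1 k]
      rw [Finset.sum_congr rfl (fun k _ => hterm k)] at h0
      simp at h0
    have all0 : ∀ m : ℕ, ∀ i : ZMod n, bv i = bv (i + (m : ZMod n)) := by
      intro m
      induction m with
      | zero => simp
      | succ m ih =>
        intro i
        rw [ih i]
        push_cast
        rw [← add_assoc]
        exact step _
    have : bv i = bv (i + ((j - i).val : ZMod n)) := all0 _ i
    rwa [ZMod.natCast_val, ZMod.cast_id, add_sub_cancel] at this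
end

section
/- Let k be an algebraically closed field of characteristic zero, F ⊇ k a field, and x, y ∈ F with x transcendental over k and y transcendental over k(x). Let L₂ ⊇ k be an algebraically closed subfield of F with x ∉ L₂. Then ⋂_{b=1}^∞ L₂‾(x^b) = L₂‾, where L₂‾(x^b) denotes the subfield generated by L₂‾ = L₂ and x^b. More precisely: an element of F lying in L₂(x^b) for every b ≥ 1 lies in L₂. -/
set_option synthInstance.maxHeartbeats 1000000
set_option maxHeartbeats 1000000
open Polynomial IntermediateField Finset

lemma mem_of_isAlgebraic' {F : Type*} [Field F] (L : Subfield F) [IsAlgClosed ↥L]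
    {w : F} (h : IsAlgebraic ↥L w) : w ∈ L := by
  have hint : IsIntegral ↥L w := h.isIntegral
  have h1 : (minpoly ↥L w).degree = 1 :=
    IsAlgClosed.degree_eq_one_of_irreducible _ (minpoly.irreducible hint)
  obtain ⟨c, hc⟩ := (minpoly.degree_eq_one_iff).mp h1
  rw [← hc]; exact c.2

lemma closure_le_adjoin' {F : Type*} [Field F] (L : Subfield F) (s : Set F) {w : F}
    (h : w ∈ Subfield.closure ((L : Set F) ∪ s)) : w ∈ IntermediateField.adjoin ↥L s := by
  have hle : Subfield.closure ((L : Set F) ∪ s) ≤ (IntermediateField.adjoin ↥L s).toSubfield := by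
    apply Subfield.closure_le.mpr
    rintro a (ha | ha)
    · exact (IntermediateField.adjoin ↥L s).algebraMap_mem ⟨a, ha⟩
    · exact IntermediateField.subset_adjoin _ _ ha
  exact hle h

/-- If `L₂` is an algebraically closed subfield of `F` (char 0) and `x ∉ L₂`,
then `⋂_{b ≥ 1} L₂(x^b) = L₂`: any element lying in `L₂(x^b)` for every `b ≥ 1`
lies in `L₂`. -/
theorem stmt16 {F : Type*} [Field F] [CharZero F] (L₂ : Subfield F)
    [IsAlgClosed ↥L₂] (x : F) (hx : x ∉ L₂) (z : F)
    (hz : ∀ b : ℕ, 1 ≤ b → z ∈ Subfield.closure ((L₂ : Set F) ∪ {x ^ b})) :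
    z ∈ L₂ := by
  by_contra hzL
  have hxT : Transcendental ↥L₂ x := fun h => hx (mem_of_isAlgebraic' L₂ h)
  -- z = f(x)/g(x)
  have hz1 : z ∈ IntermediateField.adjoin ↥L₂ {x} := by
    have := closure_le_adjoin' L₂ {x ^ 1} (hz 1 le_rfl)
    rwa [pow_one] at this
  obtain ⟨f, g, hfg⟩ := (IntermediateField.mem_adjoin_simple_iff _ _).mp hz1
  have hg : (aeval x g : F) ≠ 0 := by
    intro h
    exact hzL (by rw [hfg, h, div_zero]; exact L₂.zero_mem)
  have hgne : g ≠ 0 := fun h0 => hg (by simp [h0])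
  have hzx : z * aeval x g = aeval x f := by rw [hfg]; field_simp
  set N := max f.natDegree g.natDegree with hN
  set b := N + 1 with hbdef
  have hb : 0 < b := Nat.succ_pos _
  set K := IntermediateField.adjoin ↥L₂ {x ^ b} with hK
  have hzK : z ∈ K := closure_le_adjoin' L₂ _ (hz b (Nat.le_add_left 1 N))
  set φ := algebraMap ↥L₂ ↥K with hφ
  set q : Polynomial ↥K := f.map φ - C (⟨z, hzK⟩ : ↥K) * g.map φ with hq
  have haq : aeval x q = 0 := by
    rw [hq, map_sub, map_mul, aeval_C, aeval_map_algebraMap, aeval_map_algebraMap]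
    show aeval x f - z * aeval x g = 0
    rw [hzx, sub_self]
  have hq0 : q ≠ 0 := by
    intro h0
    apply hzL
    have hc : q.coeff g.natDegree = 0 := by rw [h0]; simp
    rw [hq, coeff_sub, coeff_C_mul, coeff_map, coeff_map, sub_eq_zero] at hc
    have hcF : (f.coeff g.natDegree : F) = z * (g.coeff g.natDegree : F) :=
      congrArg Subtype.val hc
    have hgc : (g.coeff g.natDegree : F) ≠ 0 := by
      intro h
      exact (Polynomial.leadingCoeff_ne_zero.mpr hgne) (Subtype.ext h)
    have : z = (f.coeff g.natDegree : F) * (g.coeff g.natDegree : F)⁻¹ := by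
      rw [hcF, mul_assoc, mul_inv_cancel₀ hgc, mul_one]
    rw [this]
    exact L₂.mul_mem (f.coeff g.natDegree).2 (L₂.inv_mem (g.coeff g.natDegree).2)
  have hint : IsIntegral ↥K x := (IsAlgebraic.isIntegral ⟨q, hq0, haq⟩)
  set p := minpoly ↥K x with hp
  set n := p.natDegree with hn
  -- upper bound on n
  have hnN : n ≤ N := by
    have hdvd := minpoly.dvd ↥K x haq
    have h1 : q.natDegree ≤ N := by
      refine le_trans (natDegree_sub_le _ _) (max_le ?_ ?_)
      · exact le_trans natDegree_map_le (le_max_left _ _)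
      · exact le_trans (natDegree_C_mul_le _ _)
          (le_trans natDegree_map_le (le_max_right _ _))
    exact le_trans (Polynomial.natDegree_le_of_dvd hdvd hq0) h1
  have hnb : n < b := Nat.lt_succ_of_le hnN
  -- coefficients of p as rational functions in x^b
  have hnorm : ∀ i : ℕ, ∃ r s : Polynomial ↥L₂,
      (aeval (x ^ b) s : F) ≠ 0 ∧ (p.coeff i : F) * aeval (x ^ b) s = aeval (x ^ b) r := by
    intro i
    have hmem : (p.coeff i : F) ∈ IntermediateField.adjoin ↥L₂ {x ^ b} := (p.coeff i).2
    obtain ⟨r, s, hrs⟩ := (IntermediateField.mem_adjoin_simple_iff _ _).mp hmem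
    by_cases hs : (aeval (x ^ b) s : F) = 0
    · exact ⟨0, 1, by simp, by rw [hrs, hs, div_zero]; simp⟩
    · exact ⟨r, s, hs, by rw [hrs]; field_simp⟩
  choose R S hS hRS using hnorm
  set T : Polynomial ↥L₂ := ∏ j ∈ Finset.range (n + 1), S j with hT
  have hTx : (aeval (x ^ b) T : F) ≠ 0 := by
    rw [hT, map_prod]
    exact Finset.prod_ne_zero_iff.mpr fun j _ => hS j
  set A : ℕ → Polynomial ↥L₂ :=
    fun i => R i * ∏ j ∈ (Finset.range (n + 1)).erase i, S j with hA
  have hterm : ∀ i ∈ Finset.range (n + 1),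
      (aeval (x ^ b) (A i) : F) = (p.coeff i : F) * aeval (x ^ b) T := by
    intro i hi
    rw [hA]
    simp only [map_mul, map_prod]
    rw [← hRS i, hT, map_prod, ← Finset.mul_prod_erase _ _ hi]
    ring
  -- the linear relation
  have hrel : ∑ i ∈ Finset.range (n + 1), (p.coeff i : F) * x ^ i = 0 := by
    have h0 : aeval x p = 0 := minpoly.aeval ↥K x
    rw [aeval_eq_sum_range] at h0
    rw [← h0]
    exact Finset.sum_congr rfl fun i _ => by rw [Algebra.smul_def]; rfl
  have hrel2 : ∑ i ∈ Finset.range (n + 1), (aeval (x ^ b) (A i) : F) * x ^ i = 0 := by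
    calc ∑ i ∈ Finset.range (n + 1), (aeval (x ^ b) (A i) : F) * x ^ i
        = (∑ i ∈ Finset.range (n + 1), (p.coeff i : F) * x ^ i) * aeval (x ^ b) T := by
          rw [Finset.sum_mul]
          exact Finset.sum_congr rfl fun i hi => by rw [hterm i hi]; ring
      _ = 0 := by rw [hrel, zero_mul]
  -- turn it into a polynomial identity
  set P : Polynomial ↥L₂ :=
    ∑ i ∈ Finset.range (n + 1), expand ↥L₂ b (A i) * X ^ i with hP
  have hPx : (aeval x P : F) = 0 := by
    rw [hP, map_sum, ← hrel2]
    exact Finset.sum_congr rfl fun i _ => by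
      rw [map_mul, expand_aeval, aeval_X_pow]
  have hP0 : P = 0 := (_root_.transcendental_iff.mp hxT) P hPx
  have hAn : A n = 0 := by
    apply Polynomial.ext
    intro k
    rw [coeff_zero]
    have hc : (∑ i ∈ Finset.range (n + 1),
        (expand ↥L₂ b (A i) * X ^ i).coeff (k * b + n)) = 0 := by
      rw [← finset_sum_coeff, ← hP, hP0, coeff_zero]
    rw [Finset.sum_eq_single n (fun i hi hine => ?_) (fun h => absurd (Finset.self_mem_range_succ n) h)] at hc
    · rw [coeff_mul_X_pow', if_pos (by omega : n ≤ k * b + n), coeff_expand hb,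
        if_pos (by simp : b ∣ k * b + n - n)] at hc
      rwa [(by omega : k * b + n - n = k * b), Nat.mul_div_cancel k hb] at hc
    · have hilt : i < n + 1 := Finset.mem_range.mp hi
      rw [coeff_mul_X_pow', if_pos (by omega : i ≤ k * b + n), coeff_expand hb, if_neg]
      intro hdvd
      rw [(by omega : k * b + n - i = k * b + (n - i))] at hdvd
      have h2 : b ∣ (n - i) := (Nat.dvd_add_right (Dvd.intro_left k rfl)).mp hdvd
      have := Nat.le_of_dvd (by omega) h2
      omega
  have hAx : (aeval (x ^ b) (A n) : F) = 0 := by rw [hAn, map_zero]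
  rw [hterm n (Finset.self_mem_range_succ n)] at hAx
  have hpn : (p.coeff n : F) = 1 := by
    have hm : p.Monic := minpoly.monic hint
    have h1 : p.coeff n = 1 := hm
    rw [h1]
    exact OneMemClass.coe_one _
  rw [hpn, one_mul] at hAx
  exact hTx hAx
end
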